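/- arXiv:2410.10033 — 5 statements merged into one kernel-verified Lean document; each statement's English description precedes it below -/
import Mathlib

section
/- Let n ≥ 1 be an integer and let ω = exp(2πi/n) ∈ ℂ. For every integer u with 0 ≤ u ≤ n−1 one has Σ_{j=1}^{n−1} ω^{ju}/(1 − ω^{−j}) = (n−1)/2 − u (an equality of complex numbers, where the right-hand side is the rational number (n−1)/2 − u viewed in ℂ). -/
/-!
Write `α(u) = ∑_{0<j<n} z_j^u / (1 - z_j⁻¹)` with `z_j = ζ^j`. Since `(1 - z) / (1 - z⁻¹) = -z`,
consecutive values differ by a geometric sum: `α(u) - α(u+1) = -∑_{0<j<n} (ζ^(u+1))^j = 1`.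
At `u = 0`, pairing `j` with `n - j` (so `z_{n-j} = z_j⁻¹`) and using
`(1 - z)⁻¹ + (1 - z⁻¹)⁻¹ = 1` gives `2 α(0) = n - 1`.
-/

open Finset

section

variable {K : Type*} [Field K]

theorem sum_Ico_one_pow_eq_neg_one {z : K} {n : ℕ} (hn : n ≠ 0) (hz : z ≠ 1) (hzn : z ^ n = 1) :
    ∑ j ∈ Ico 1 n, z ^ j = -1 := by
  rw [geom_sum_Ico hz (Nat.one_le_iff_ne_zero.mpr hn), hzn, pow_one, ← neg_sub,
    neg_div, div_self (sub_ne_zero.mpr hz)]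

theorem inv_one_sub_add_inv_one_sub_inv {z : K} (hz0 : z ≠ 0) (hz1 : z ≠ 1) :
    (1 - z)⁻¹ + (1 - z⁻¹)⁻¹ = 1 := by
  have h : 1 - z ≠ 0 := sub_ne_zero.mpr hz1.symm
  have h' : z - 1 ≠ 0 := sub_ne_zero.mpr hz1
  field_simp
  ring

theorem pow_div_one_sub_inv_sub_pow_succ_div {z : K} (hz0 : z ≠ 0) (hz1 : z ≠ 1) (u : ℕ) :
    z ^ u / (1 - z⁻¹) - z ^ (u + 1) / (1 - z⁻¹) = -z ^ (u + 1) := by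
  have h : z - 1 ≠ 0 := sub_ne_zero.mpr hz1
  field_simp
  ring

/-- The paper's `α(u, n) = ∑_{0<j<n} ζ^{ju} / (1 - ζ^{-j})`, written in terms of `ζ ^ j`. -/
def alphaSum (ζ : K) (n u : ℕ) : K :=
  ∑ j ∈ Ico 1 n, (ζ ^ j) ^ u / (1 - (ζ ^ j)⁻¹)

theorem alphaSum_zero (ζ : K) (n : ℕ) :
    alphaSum ζ n 0 = ∑ j ∈ Ico 1 n, (1 - (ζ ^ j)⁻¹)⁻¹ := by
  simp only [alphaSum, pow_zero, one_div]

variable {ζ : K} {n : ℕ}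

namespace IsPrimitiveRoot

theorem pow_ne_zero_and_ne_one (hζ : IsPrimitiveRoot ζ n) {j : ℕ} (hj : j ∈ Ico 1 n) :
    ζ ^ j ≠ 0 ∧ ζ ^ j ≠ 1 := by
  rw [mem_Ico] at hj
  exact ⟨pow_ne_zero _ (hζ.ne_zero (by omega)), hζ.pow_ne_one_of_pos_of_lt (by omega) hj.2⟩

theorem pow_sub_eq_inv (hζ : IsPrimitiveRoot ζ n) {j : ℕ} (hj : j ≤ n) :
    ζ ^ (n - j) = (ζ ^ j)⁻¹ := by
  rcases eq_or_ne n 0 with rfl | hn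
  · simp [Nat.le_zero.mp hj]
  rw [pow_sub₀ ζ (hζ.ne_zero hn) hj, hζ.pow_eq_one, one_mul]

theorem alphaSum_sub_alphaSum_succ (hζ : IsPrimitiveRoot ζ n) {u : ℕ} (hu : u + 1 < n) :
    alphaSum ζ n u - alphaSum ζ n (u + 1) = 1 := by
  have hroot : (ζ ^ (u + 1)) ^ n = 1 := by rw [pow_right_comm, hζ.pow_eq_one, one_pow]
  calc alphaSum ζ n u - alphaSum ζ n (u + 1)
      = -∑ j ∈ Ico 1 n, (ζ ^ (u + 1)) ^ j := by
        rw [alphaSum, alphaSum, ← sum_sub_distrib, ← sum_neg_distrib]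
        refine sum_congr rfl fun j hj => ?_
        obtain ⟨h0, h1⟩ := hζ.pow_ne_zero_and_ne_one hj
        rw [pow_div_one_sub_inv_sub_pow_succ_div h0 h1, pow_right_comm]
    _ = 1 := by
        rw [sum_Ico_one_pow_eq_neg_one (by omega) (hζ.pow_ne_one_of_pos_of_lt (by omega) hu) hroot,
          neg_neg]

theorem two_mul_alphaSum_zero (hζ : IsPrimitiveRoot ζ n) (hn : n ≠ 0) :
    2 * alphaSum ζ n 0 = n - 1 := by
  have hreflect : ∑ j ∈ Ico 1 n, (1 - (ζ ^ (n - j))⁻¹)⁻¹ = alphaSum ζ n 0 := by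
    rw [sum_Ico_reflect (fun j => (1 - (ζ ^ j)⁻¹)⁻¹) 1 (Nat.le_succ n), Nat.add_sub_cancel,
      Nat.add_sub_cancel_left, alphaSum_zero]
  calc 2 * alphaSum ζ n 0
      = ∑ j ∈ Ico 1 n, ((1 - ζ ^ j)⁻¹ + (1 - (ζ ^ j)⁻¹)⁻¹) := by
        rw [two_mul, sum_add_distrib, ← alphaSum_zero]
        nth_rewrite 1 [← hreflect]
        refine congrArg (· + _) (sum_congr rfl fun j hj => ?_)
        rw [hζ.pow_sub_eq_inv (mem_Ico.mp hj).2.le, inv_inv]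
    _ = n - 1 := by
        rw [sum_congr rfl fun j hj => inv_one_sub_add_inv_one_sub_inv
          (hζ.pow_ne_zero_and_ne_one hj).1 (hζ.pow_ne_zero_and_ne_one hj).2]
        rw [sum_const, Nat.card_Ico, nsmul_one, Nat.cast_sub (Nat.one_le_iff_ne_zero.mpr hn),
          Nat.cast_one]

theorem two_mul_alphaSum (hζ : IsPrimitiveRoot ζ n) {u : ℕ} (hu : u < n) :
    2 * alphaSum ζ n u = n - 1 - 2 * u := by
  induction u with
  | zero => simpa using hζ.two_mul_alphaSum_zero (by omega)
  | succ u ih =>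
    have hstep := hζ.alphaSum_sub_alphaSum_succ hu
    push_cast
    linear_combination ih (by omega) - 2 * hstep

end IsPrimitiveRoot

end

/-- For `n ≥ 1`, `ω = exp(2πi/n)` and `0 ≤ u ≤ n-1`:
`∑_{j=1}^{n-1} ω^{ju}/(1 - ω^{-j}) = (n-1)/2 - u`. -/
theorem alpha_sum_eval (n : ℕ) (hn : 1 ≤ n) (ω : ℂ)
    (hω : ω = Complex.exp (2 * Real.pi * Complex.I / n))
    (u : ℕ) (hu : u ≤ n - 1) :
    ∑ j ∈ Finset.Icc 1 (n - 1), ω ^ (j * u) / (1 - ω ^ (-(j : ℤ))) =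
      ((n : ℂ) - 1) / 2 - (u : ℂ) := by
  have hprim : IsPrimitiveRoot ω n := hω ▸ Complex.isPrimitiveRoot_exp n (by omega)
  have hsum : ∑ j ∈ Icc 1 (n - 1), ω ^ (j * u) / (1 - ω ^ (-(j : ℤ))) = alphaSum ω n u := by
    rw [alphaSum, ← Ico_add_one_right_eq_Icc, Nat.sub_add_cancel hn]
    simp only [pow_mul, zpow_neg, zpow_natCast]
  rw [hsum]
  linear_combination hprim.two_mul_alphaSum (show u < n by omega) / 2
end

section
/- Let p ≥ 1 be an integer and ω = exp(2πi/p) ∈ ℂ. Then Σ_{j=1}^{p−1} ((1+ω^{−j})/(1−ω^{−j}))² = −(p−1)(p−2)/3 (an equality of complex numbers, the right-hand side being a rational number viewed in ℂ). -/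
/-! For a `p`-th root of unity `z ≠ 1` one has `(1 - z) * A z = -p` with `A z = ∑_{k<p} k z^k`,
so `(1 + z) / (1 - z) = -(1 + (2 / p) * A z)` is a polynomial in `z`. Summed over all `p`-th
roots of unity, orthogonality `∑_j ζ^{jm} = p * [p ∣ m]` keeps only the terms of
`(1 + (2/p) A)²` of exponent divisible by `p`, giving `p + (4/p) ∑_{k<p} k (p - k)`; removing
the value `p²` at `z = 1` leaves `-(p - 1)(p - 2)/3`. -/

open Finset

theorem sum_range_ite_dvd_add {M : Type*} [AddCommMonoid M] {p k : ℕ} (hk0 : k ≠ 0)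
    (hkp : k < p) (f : ℕ → M) :
    ∑ l ∈ range p, (if p ∣ k + l then f l else 0) = f (p - k) := by
  have hdvd : ∀ l ∈ range p, p ∣ k + l ↔ l = p - k := by
    intro l hl
    rw [mem_range] at hl
    constructor
    · rintro ⟨c, hc⟩
      have : c < 2 := by nlinarith
      interval_cases c <;> omega
    · rintro rfl
      exact ⟨1, by omega⟩
  rw [sum_congr rfl fun l hl => if_congr (hdvd l hl) rfl rfl, sum_ite_eq']
  exact if_pos (mem_range.mpr (by omega))

section CommRing

variable {R : Type*} [CommRing R]

theorem two_mul_sum_range_natCast (n : ℕ) : 2 * ∑ k ∈ range n, (k : R) = n * (n - 1) := by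
  induction n with
  | zero => simp
  | succ n ih => rw [sum_range_succ, mul_add, ih]; push_cast; ring

theorem six_mul_sum_range_natCast_sq (n : ℕ) :
    6 * ∑ k ∈ range n, (k : R) ^ 2 = n * (n - 1) * (2 * n - 1) := by
  induction n with
  | zero => simp
  | succ n ih => rw [sum_range_succ, mul_add, ih]; push_cast; ring

theorem six_mul_sum_range_natCast_mul_sub (n : ℕ) :
    6 * ∑ k ∈ range n, (k : R) * (n - k) = (n - 1) * n * (n + 1) := by
  have hdistrib : ∑ k ∈ range n, (k : R) * (n - k) =
      n * ∑ k ∈ range n, (k : R) - ∑ k ∈ range n, (k : R) ^ 2 := by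
    rw [mul_sum, ← sum_sub_distrib]
    exact sum_congr rfl fun k _ => by ring
  rw [hdistrib]
  linear_combination (3 * (n : R)) * two_mul_sum_range_natCast (R := R) n -
    six_mul_sum_range_natCast_sq (R := R) n

theorem one_sub_mul_sum_range_natCast_mul_pow (z : R) (n : ℕ) :
    (1 - z) * ∑ k ∈ range n, (k : R) * z ^ k =
      ∑ k ∈ range n, z ^ k - 1 - (n - 1) * z ^ n := by
  induction n with
  | zero => simp
  | succ n ih =>
    rw [sum_range_succ, sum_range_succ (fun k => z ^ k)]
    push_cast
    linear_combination ih

end CommRing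

section IsDomain

variable {R : Type*} [CommRing R] [IsDomain R] {z ζ : R} {n p : ℕ}

theorem geom_sum_eq_zero_of_pow_eq_one (hz : z ^ n = 1) (hz1 : z ≠ 1) :
    ∑ k ∈ range n, z ^ k = 0 := by
  refine eq_zero_of_ne_zero_of_mul_right_eq_zero (sub_ne_zero_of_ne hz1) ?_
  rw [geom_sum_mul, hz, sub_self]

theorem one_sub_mul_sum_range_natCast_mul_pow_of_pow_eq_one (hz : z ^ n = 1) (hz1 : z ≠ 1) :
    (1 - z) * ∑ k ∈ range n, (k : R) * z ^ k = -n := by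
  rw [one_sub_mul_sum_range_natCast_mul_pow, geom_sum_eq_zero_of_pow_eq_one hz hz1, hz]
  ring

theorem IsPrimitiveRoot.sum_range_pow_pow (h : IsPrimitiveRoot ζ p) (m : ℕ) :
    ∑ j ∈ range p, (ζ ^ j) ^ m = if p ∣ m then (p : R) else 0 := by
  rw [sum_congr rfl fun j _ => pow_right_comm ζ j m]
  split_ifs with hm
  · simp [(h.pow_eq_one_iff_dvd m).mpr hm]
  · refine geom_sum_eq_zero_of_pow_eq_one ?_ (mt (h.pow_eq_one_iff_dvd m).mp hm)
    rw [pow_right_comm, h.pow_eq_one, one_pow]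

theorem IsPrimitiveRoot.sum_range_sum_natCast_mul_pow (h : IsPrimitiveRoot ζ p) :
    ∑ j ∈ range p, ∑ k ∈ range p, (k : R) * (ζ ^ j) ^ k = 0 := by
  rw [sum_comm]
  refine sum_eq_zero fun k hk => ?_
  rw [← mul_sum, h.sum_range_pow_pow]
  split_ifs with hpk
  · simp [Nat.eq_zero_of_dvd_of_lt hpk (mem_range.mp hk)]
  · rw [mul_zero]

theorem IsPrimitiveRoot.sum_range_sum_natCast_mul_pow_sq (h : IsPrimitiveRoot ζ p) :
    ∑ j ∈ range p, (∑ k ∈ range p, (k : R) * (ζ ^ j) ^ k) ^ 2 =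
      p * ∑ k ∈ range p, (k : R) * (p - k) := by
  have hexpand : ∀ j, (∑ k ∈ range p, (k : R) * (ζ ^ j) ^ k) ^ 2 =
      ∑ k ∈ range p, ∑ l ∈ range p, (k * l : R) * (ζ ^ j) ^ (k + l) := by
    intro j
    rw [sq, sum_mul_sum]
    refine sum_congr rfl fun k _ => sum_congr rfl fun l _ => ?_
    ring
  simp only [hexpand]
  rw [sum_comm, mul_sum]
  refine sum_congr rfl fun k hk => ?_
  rw [sum_comm]
  simp only [← mul_sum, h.sum_range_pow_pow, mul_ite, mul_zero]
  rcases eq_or_ne k 0 with rfl | hk0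
  · simp
  · rw [sum_range_ite_dvd_add hk0 (mem_range.mp hk), Nat.cast_sub (mem_range.mp hk).le]
    ring

end IsDomain

section Field

variable {K : Type*} [Field K] {z ζ : K} {p : ℕ}

theorem one_add_div_one_sub_eq_of_pow_eq_one (hz : z ^ p = 1) (hz1 : z ≠ 1) (hp : (p : K) ≠ 0) :
    (1 + z) / (1 - z) = -(1 + 2 / p * ∑ k ∈ range p, (k : K) * z ^ k) := by
  have hA := one_sub_mul_sum_range_natCast_mul_pow_of_pow_eq_one hz hz1
  have h1z : 1 - z ≠ 0 := sub_ne_zero_of_ne hz1.symm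
  field_simp
  linear_combination 2 * hA

theorem IsPrimitiveRoot.sum_Icc_sq_one_add_div_one_sub [CharZero K] (h : IsPrimitiveRoot ζ p)
    (hp : 0 < p) :
    ∑ j ∈ Icc 1 (p - 1), ((1 + ζ ^ j) / (1 - ζ ^ j)) ^ 2 =
      -(((p : K) - 1) * ((p : K) - 2)) / 3 := by
  set g : K → K := fun z => (1 + 2 / p * ∑ k ∈ range p, (k : K) * z ^ k) ^ 2
  have hp0 : (p : K) ≠ 0 := Nat.cast_ne_zero.mpr hp.ne'
  have hterm : ∀ j ∈ Icc 1 (p - 1), ((1 + ζ ^ j) / (1 - ζ ^ j)) ^ 2 = g (ζ ^ j) := by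
    intro j hj
    rw [mem_Icc] at hj
    rw [one_add_div_one_sub_eq_of_pow_eq_one (by rw [pow_right_comm, h.pow_eq_one, one_pow])
        (h.pow_ne_one_of_pos_of_lt (by omega) (by omega)) hp0, neg_sq]
  have hsplit : ∑ j ∈ range p, g (ζ ^ j) = g 1 + ∑ j ∈ Icc 1 (p - 1), g (ζ ^ j) := by
    rw [range_eq_Ico, sum_eq_sum_Ico_succ_bot hp, ← Ico_add_one_right_eq_Icc,
      Nat.sub_one_add_one hp.ne', pow_zero, zero_add]
  have hall : ∑ j ∈ range p, g (ζ ^ j) = p + 4 / p * ∑ k ∈ range p, (k : K) * (p - k) := by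
    simp only [g, add_sq, sum_add_distrib, mul_pow, ← mul_sum, h.sum_range_sum_natCast_mul_pow,
      h.sum_range_sum_natCast_mul_pow_sq, sum_const, card_range, nsmul_eq_mul, mul_one, mul_zero,
      add_zero]
    field_simp
    ring
  have hone : g 1 = p ^ 2 := by
    simp only [g, one_pow, mul_one]
    rw [div_mul_eq_mul_div, two_mul_sum_range_natCast, mul_div_cancel_left₀ _ hp0]
    ring
  rw [sum_congr rfl hterm, eq_sub_of_add_eq' hsplit.symm, hall, hone]
  have := six_mul_sum_range_natCast_mul_sub (R := K) p
  field_simp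
  linear_combination 2 * this

end Field

/-- For `p ≥ 1` and `ω = exp(2πi/p)`:
`∑_{j=1}^{p-1} ((1+ω^{-j})/(1-ω^{-j}))² = -(p-1)(p-2)/3`. -/
theorem eta_sig_lens_sum (p : ℕ) (hp : 1 ≤ p) (ω : ℂ)
    (hω : ω = Complex.exp (2 * Real.pi * Complex.I / p)) :
    ∑ j ∈ Finset.Icc 1 (p - 1), ((1 + ω ^ (-(j : ℤ))) / (1 - ω ^ (-(j : ℤ)))) ^ 2 =
      -(((p : ℂ) - 1) * ((p : ℂ) - 2)) / 3 := by
  have hζ : IsPrimitiveRoot ω⁻¹ p := (hω ▸ Complex.isPrimitiveRoot_exp p (by omega)).inv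
  simpa only [zpow_neg, zpow_natCast, inv_pow] using hζ.sum_Icc_sq_one_add_div_one_sub hp
end

section
/- Let p ≥ 1 be an integer, let ω = exp(2πi/p) ∈ ℂ, and let u be an integer with 0 ≤ u ≤ p−1. Then (1/p) · Σ_{j=1}^{p−1} ω^{ju}/(1−ω^{−j})² − (p−1)(p−2)/(24p) = 1/8 − (2u+2−p)²/(8p) (an equality of complex numbers, the right-hand side being a rational number viewed in ℂ). -/
/-!
Every nontrivial `p`-th root of unity `x` satisfies
`1 / (1 - x)² = (1 / 2p) ∑_{k < p} ((p - 2) k - k²) xᵏ`,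
which follows from the closed forms of `∑ k xᵏ` and `∑ k² xᵏ` at `xᵖ = 1`. Substituting
`x = ω⁻ʲ` and exchanging the two sums, orthogonality of the characters `j ↦ ω^{j (u - k)}` picks out
the coefficient with `k = u`; what remains are the power sums `∑ k` and `∑ k²`.
-/

open Finset

section PowerSums

variable {K : Type*} [Field K] [CharZero K]

theorem sum_range_natCast (n : ℕ) : ∑ k ∈ range n, (k : K) = n * (n - 1) / 2 := by
  induction n with
  | zero => simp
  | succ n ih => rw [sum_range_succ, ih]; push_cast; ring

theorem sum_range_natCast_sq (n : ℕ) :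
    ∑ k ∈ range n, (k : K) ^ 2 = n * (n - 1) * (2 * n - 1) / 6 := by
  induction n with
  | zero => simp
  | succ n ih => rw [sum_range_succ, ih]; push_cast; ring

end PowerSums

section ArithmeticGeometric

variable {R : Type*} [CommRing R]

theorem sub_one_sq_mul_sum_range_mul_pow (x : R) (n : ℕ) :
    (x - 1) ^ 2 * ∑ k ∈ range n, (k : R) * x ^ k = n * x ^ n * (x - 1) - x * (x ^ n - 1) := by
  induction n with
  | zero => simp
  | succ n ih => rw [sum_range_succ, mul_add, ih]; push_cast; ring

theorem sub_one_pow_three_mul_sum_range_sq_mul_pow (x : R) (n : ℕ) :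
    (x - 1) ^ 3 * ∑ k ∈ range n, (k : R) ^ 2 * x ^ k =
      x ^ n * (n ^ 2 * (x - 1) ^ 2 - 2 * n * x * (x - 1) + x * (x + 1)) - x * (x + 1) := by
  induction n with
  | zero => simp
  | succ n ih => rw [sum_range_succ, mul_add, ih]; push_cast; ring

end ArithmeticGeometric

theorem inv_one_sub_sq_eq_sum_of_pow_eq_one {K : Type*} [Field K] [CharZero K] {p : ℕ} {x : K}
    (hp : p ≠ 0) (hx : x ^ p = 1) (hx1 : x ≠ 1) :
    ((1 - x) ^ 2)⁻¹ = (2 * (p : K))⁻¹ * ∑ k ∈ range p, (((p : K) - 2) * k - k ^ 2) * x ^ k := by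
  have h1 := sub_one_sq_mul_sum_range_mul_pow x p
  have h2 := sub_one_pow_three_mul_sum_range_sq_mul_pow x p
  rw [hx] at h1 h2
  have hx1' : x - 1 ≠ 0 := sub_ne_zero.2 hx1
  have hp' : (p : K) ≠ 0 := Nat.cast_ne_zero.2 hp
  simp only [sub_mul, mul_assoc, sum_sub_distrib, ← mul_sum]
  field_simp
  refine mul_left_cancel₀ hx1' ?_
  linear_combination (-((p : K) - 2) * (x - 1)) * h1 + h2

namespace IsPrimitiveRoot

variable {K : Type*} [Field K] {ω : K} {p : ℕ}

theorem sum_range_zpow_pow_eq_ite (hω : IsPrimitiveRoot ω p) (m : ℤ) :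
    ∑ j ∈ range p, (ω ^ m) ^ j = if (p : ℤ) ∣ m then (p : K) else 0 := by
  split_ifs with h
  · simp [(hω.zpow_eq_one_iff_dvd m).2 h]
  · have hm : ω ^ m ≠ 1 := mt (hω.zpow_eq_one_iff_dvd m).1 h
    rw [geom_sum_eq hm, ← zpow_natCast, ← zpow_mul, mul_comm, zpow_mul, zpow_natCast,
      hω.pow_eq_one, one_zpow, sub_self, zero_div]

theorem sum_Icc_zpow_pow_eq_ite (hω : IsPrimitiveRoot ω p) (hp : 0 < p) (m : ℤ) :
    ∑ j ∈ Icc 1 (p - 1), (ω ^ m) ^ j = (if (p : ℤ) ∣ m then (p : K) else 0) - 1 := by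
  rw [← hω.sum_range_zpow_pow_eq_ite m, range_eq_Ico, sum_eq_sum_Ico_succ_bot hp, pow_zero,
    zero_add, ← Ico_add_one_right_eq_Icc, Nat.sub_one_add_one hp.ne', add_sub_cancel_left]

theorem sum_Icc_zpow_sub_pow_eq_ite (hω : IsPrimitiveRoot ω p) {k u : ℕ} (hk : k < p)
    (hu : u < p) :
    ∑ j ∈ Icc 1 (p - 1), (ω ^ ((u : ℤ) - k)) ^ j = (if k = u then (p : K) else 0) - 1 := by
  have hdvd : (p : ℤ) ∣ (u : ℤ) - k ↔ k = u :=
    ⟨fun h => (Nat.modEq_iff_dvd.2 h).eq_of_lt_of_lt hk hu, fun h => by simp [h]⟩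
  simp only [hω.sum_Icc_zpow_pow_eq_ite (by omega), hdvd]

theorem pow_mul_div_one_sub_zpow_neg_sq_eq_sum [CharZero K] (hω : IsPrimitiveRoot ω p) {j : ℕ}
    (hj : j ∈ Icc 1 (p - 1)) (u : ℕ) :
    ω ^ (j * u) / (1 - ω ^ (-(j : ℤ))) ^ 2 =
      (2 * (p : K))⁻¹ * ∑ k ∈ range p, (((p : K) - 2) * k - k ^ 2) * (ω ^ ((u : ℤ) - k)) ^ j := by
  obtain ⟨hj1, hjp⟩ := mem_Icc.1 hj
  have hp0 : p ≠ 0 := by omega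
  have hx : (ω ^ (-(j : ℤ))) ^ p = 1 := by
    rw [← zpow_natCast, ← zpow_mul, mul_comm, zpow_mul, zpow_natCast, hω.pow_eq_one, one_zpow]
  have hx1 : ω ^ (-(j : ℤ)) ≠ 1 := by
    rw [Ne, hω.zpow_eq_one_iff_dvd, dvd_neg, Int.natCast_dvd_natCast]
    exact Nat.not_dvd_of_pos_of_lt hj1 (by omega)
  rw [div_eq_mul_inv, inv_one_sub_sq_eq_sum_of_pow_eq_one hp0 hx hx1, mul_left_comm, mul_sum]
  congr 1
  refine sum_congr rfl fun k _ => ?_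
  rw [mul_left_comm]
  congr 1
  simp only [← zpow_natCast, ← zpow_mul, ← zpow_add₀ (hω.ne_zero hp0)]
  congr 1
  push_cast
  ring

end IsPrimitiveRoot

/-- For `p ≥ 1`, `ω = exp(2πi/p)` and `0 ≤ u ≤ p-1`:
`(1/p) ∑_{j=1}^{p-1} ω^{ju}/(1-ω^{-j})² - (p-1)(p-2)/(24p) = 1/8 - (2u+2-p)²/(8p)`. -/
theorem delta_lens_space (p : ℕ) (hp : 1 ≤ p) (ω : ℂ)
    (hω : ω = Complex.exp (2 * Real.pi * Complex.I / p))
    (u : ℕ) (hu : u ≤ p - 1) :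
    (1 / (p : ℂ)) * ∑ j ∈ Finset.Icc 1 (p - 1), ω ^ (j * u) / (1 - ω ^ (-(j : ℤ))) ^ 2 -
        ((p : ℂ) - 1) * ((p : ℂ) - 2) / (24 * (p : ℂ)) =
      1 / 8 - (2 * (u : ℂ) + 2 - (p : ℂ)) ^ 2 / (8 * (p : ℂ)) := by
  have hp0 : p ≠ 0 := by omega
  have hprim : IsPrimitiveRoot ω p := hω ▸ Complex.isPrimitiveRoot_exp p hp0
  have hu' : u < p := by omega
  rw [sum_congr rfl fun j hj => hprim.pow_mul_div_one_sub_zpow_neg_sq_eq_sum hj u, ← mul_sum,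
    sum_comm, sum_congr rfl fun k hk => by
      rw [← mul_sum, hprim.sum_Icc_zpow_sub_pow_eq_ite (mem_range.1 hk) hu']]
  simp only [mul_sub, mul_ite, mul_zero, mul_one, sum_sub_distrib, sum_ite_eq',
    if_pos (mem_range.2 hu'), ← mul_sum, sum_range_natCast, sum_range_natCast_sq]
  field_simp
  ring
end

section
/- Let n ≥ 1 be an integer and let ζ = exp(πi/n) ∈ ℂ. Then Σ_{j=1}^{2n−1} ζ^{−j}/(1−ζ^{−j})² = (1−4n²)/12 (an equality of complex numbers, the right-hand side being a rational number viewed in ℂ). -/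
/-!
Put `F(x) = ∑_{k<m} k xᵏ`. For an `m`-th root of unity `x ≠ 1` one has `(x - 1) F(x) = m`, hence
`x / (1 - x)² = -F(x) F(x⁻¹) / m²`. Summing over the powers `ζʲ` of a primitive `m`-th root of unity,
orthogonality of characters gives the Parseval identity `∑_{j<m} F(ζʲ) F(ζ⁻ʲ) = m ∑_{k<m} k²`;
it remains to remove the term `j = 0`, which is `F(1)² = (m(m-1)/2)²`, and to evaluate `∑ k²`.
-/

open Finset

section CommRing

variable {R : Type*} [CommRing R]

theorem sum_range_natCast_mul_two (m : ℕ) :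
    (∑ k ∈ range m, (k : R)) * 2 = m * (m - 1) := by
  induction m with
  | zero => simp
  | succ m ih => rw [sum_range_succ, add_mul, ih]; push_cast; ring

theorem sum_range_natCast_sq_mul_six (m : ℕ) :
    (∑ k ∈ range m, (k : R) ^ 2) * 6 = m * (m - 1) * (2 * m - 1) := by
  induction m with
  | zero => simp
  | succ m ih => rw [sum_range_succ, add_mul, ih]; push_cast; ring

theorem sub_one_mul_sum_range_natCast_mul_pow (x : R) (m : ℕ) :
    (x - 1) * ∑ k ∈ range m, (k : R) * x ^ k = m * x ^ m - x * ∑ k ∈ range m, x ^ k := by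
  induction m with
  | zero => simp
  | succ m ih =>
    rw [sum_range_succ, sum_range_succ (x ^ ·)]
    push_cast
    linear_combination ih

end CommRing

section Field

variable {K : Type*} [Field K]

theorem sum_range_pow_eq_zero_of_pow_eq_one {x : K} {m : ℕ} (hxm : x ^ m = 1) (hx : x ≠ 1) :
    ∑ k ∈ range m, x ^ k = 0 := by
  rw [geom_sum_eq hx, hxm, sub_self, zero_div]

theorem sum_range_natCast_mul_pow_of_pow_eq_one {x : K} {m : ℕ} (hxm : x ^ m = 1) (hx : x ≠ 1) :
    ∑ k ∈ range m, (k : K) * x ^ k = m / (x - 1) := by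
  rw [eq_div_iff (sub_ne_zero.mpr hx), mul_comm, sub_one_mul_sum_range_natCast_mul_pow,
    sum_range_pow_eq_zero_of_pow_eq_one hxm hx, hxm]
  ring

def weightedGeomSum (m : ℕ) (x : K) : K :=
  ∑ k ∈ range m, (k : K) * x ^ k

theorem div_one_sub_sq_eq_weightedGeomSum {x : K} {m : ℕ} (hm : (m : K) ≠ 0) (hxm : x ^ m = 1)
    (hx : x ≠ 1) :
    x / (1 - x) ^ 2 = -(weightedGeomSum m x * weightedGeomSum m x⁻¹) / (m : K) ^ 2 := by
  have hx0 : x ≠ 0 := by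
    rintro rfl
    rw [zero_pow (by rintro rfl; exact hm Nat.cast_zero)] at hxm
    exact zero_ne_one hxm
  have hinv : x⁻¹ ≠ 1 := inv_ne_one.mpr hx
  rw [weightedGeomSum, weightedGeomSum, sum_range_natCast_mul_pow_of_pow_eq_one hxm hx,
    sum_range_natCast_mul_pow_of_pow_eq_one (by rw [inv_pow, hxm, inv_one]) hinv]
  field_simp
  ring

namespace IsPrimitiveRoot

variable {ζ : K} {m : ℕ}

theorem sum_range_div_pow_pow (hζ : IsPrimitiveRoot ζ m) {k l : ℕ} (hk : k < m) (hl : l < m) :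
    ∑ j ∈ range m, (ζ ^ k / ζ ^ l) ^ j = if k = l then (m : K) else 0 := by
  split_ifs with hkl
  · simp [hkl, hζ.ne_zero (by omega)]
  · refine sum_range_pow_eq_zero_of_pow_eq_one ?_
      (div_ne_one_of_ne fun h => hkl (hζ.pow_inj hk hl h))
    rw [div_pow, pow_right_comm, hζ.pow_eq_one, one_pow, pow_right_comm, hζ.pow_eq_one, one_pow,
      div_one]

theorem sum_range_weightedGeomSum_mul_inv (hζ : IsPrimitiveRoot ζ m) :
    ∑ j ∈ range m, weightedGeomSum m (ζ ^ j) * weightedGeomSum m (ζ ^ j)⁻¹ =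
      m * ∑ k ∈ range m, (k : K) ^ 2 := by
  have hterm : ∀ j k l : ℕ, (k : K) * (ζ ^ j) ^ k * ((l : K) * (ζ ^ j)⁻¹ ^ l) =
      k * l * (ζ ^ k / ζ ^ l) ^ j := fun j k l => by
    rw [div_pow, inv_pow, ← pow_mul, ← pow_mul, ← pow_mul, ← pow_mul, mul_comm j k, mul_comm j l]
    ring
  simp_rw [weightedGeomSum, sum_mul_sum, hterm]
  calc ∑ j ∈ range m, ∑ k ∈ range m, ∑ l ∈ range m, (k : K) * l * (ζ ^ k / ζ ^ l) ^ j
      = ∑ k ∈ range m, ∑ l ∈ range m, (k : K) * l * ∑ j ∈ range m, (ζ ^ k / ζ ^ l) ^ j := by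
        rw [sum_comm]
        refine sum_congr rfl fun k _ => ?_
        rw [sum_comm]
        simp_rw [mul_sum]
    _ = ∑ k ∈ range m, ∑ l ∈ range m, (k : K) * l * if k = l then (m : K) else 0 :=
        sum_congr rfl fun k hk => sum_congr rfl fun l hl => by
          rw [hζ.sum_range_div_pow_pow (mem_range.mp hk) (mem_range.mp hl)]
    _ = m * ∑ k ∈ range m, (k : K) ^ 2 := by
        simp only [mul_ite, mul_zero, sum_ite_eq, mem_range, mul_sum]
        refine sum_congr rfl fun k hk => ?_
        rw [if_pos (mem_range.mp hk)]
        ring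

theorem sum_Ico_pow_div_one_sub_pow_sq [CharZero K] (hζ : IsPrimitiveRoot ζ m) (hm : m ≠ 0) :
    ∑ j ∈ Ico 1 m, ζ ^ j / (1 - ζ ^ j) ^ 2 = (1 - (m : K) ^ 2) / 12 := by
  have hmK : (m : K) ≠ 0 := Nat.cast_ne_zero.mpr hm
  have hterms : ∑ j ∈ Ico 1 m, weightedGeomSum m (ζ ^ j) * weightedGeomSum m (ζ ^ j)⁻¹ =
      -(m : K) ^ 2 * ∑ j ∈ Ico 1 m, ζ ^ j / (1 - ζ ^ j) ^ 2 := by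
    rw [mul_sum]
    refine sum_congr rfl fun j hj => ?_
    obtain ⟨hj1, hjm⟩ := mem_Ico.mp hj
    rw [div_one_sub_sq_eq_weightedGeomSum hmK (by rw [pow_right_comm, hζ.pow_eq_one, one_pow])
      (hζ.pow_ne_one_of_pos_of_lt (by omega) hjm)]
    field_simp
  have hparseval := hζ.sum_range_weightedGeomSum_mul_inv
  rw [sum_range_eq_add_Ico _ (Nat.pos_of_ne_zero hm), hterms, pow_zero, inv_one] at hparseval
  have hF1 : weightedGeomSum m (1 : K) * 2 = m * (m - 1) := by
    simpa [weightedGeomSum] using sum_range_natCast_mul_two (R := K) m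
  have hsq := sum_range_natCast_sq_mul_six (R := K) m
  refine mul_left_cancel₀ (pow_ne_zero 2 hmK) ?_
  linear_combination (-1 : K) * hparseval + (weightedGeomSum m (1 : K) * 2 + m * (m - 1)) / 4 * hF1
    - m / 6 * hsq

end IsPrimitiveRoot

end Field

/-- For `n ≥ 1` and `ζ = exp(πi/n)`:
`∑_{j=1}^{2n-1} ζ^{-j}/(1-ζ^{-j})² = (1-4n²)/12`. -/
theorem beta_sum_prism_v0 (n : ℕ) (hn : 1 ≤ n) (ζ : ℂ)
    (hζ : ζ = Complex.exp (Real.pi * Complex.I / n)) :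
    ∑ j ∈ Finset.Icc 1 (2 * n - 1), ζ ^ (-(j : ℤ)) / (1 - ζ ^ (-(j : ℤ))) ^ 2 =
      (1 - 4 * (n : ℂ) ^ 2) / 12 := by
  have hprim : IsPrimitiveRoot ζ (2 * n) := by
    convert Complex.isPrimitiveRoot_exp (2 * n) (by omega) using 2
    rw [hζ]
    push_cast
    field_simp
  have hIcc : Icc 1 (2 * n - 1) = Ico 1 (2 * n) := by
    ext j
    simp only [mem_Icc, mem_Ico]
    omega
  simp_rw [hIcc, zpow_neg, zpow_natCast, ← inv_pow]
  rw [hprim.inv.sum_Ico_pow_div_one_sub_pow_sq (by omega)]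
  push_cast
  ring
end

section
/- Let p be a prime, let n be a positive integer divisible by p, and set m = n/p. Let c and c̃ be integers satisfying: c ≡ n (mod 2), −n < c ≤ n, c̃ ≡ m (mod 2), −m < c̃ ≤ m, and 2m divides (c + n) − (c̃ + m). Define the rational number ν = (p−1) + (1/(4m))·( (c² − n²) − (c̃² − m²) ). Then ν ≥ (p−1) + ((p−1)/2)·(c − n). -/
/-- Lower bound for the contribution `ν` of a branch sphere to the expected
dimension of the Seiberg–Witten moduli space of a degree-`p` cyclic branched
cover: with `m = n/p`, `ν = (p-1) + (1/(4m))((c²-n²) - (c̃²-m²))` satisfies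
`ν ≥ (p-1) + ((p-1)/2)(c-n)`. -/
theorem nu_lower_bound (p : ℕ) (hp : p.Prime) (n : ℕ) (hn : 0 < n) (hpn : p ∣ n)
    (m : ℕ) (hm : m = n / p) (c ct : ℤ)
    (hc2 : c ≡ (n : ℤ) [ZMOD 2]) (hc1 : -(n : ℤ) < c) (hc3 : c ≤ (n : ℤ))
    (hct2 : ct ≡ (m : ℤ) [ZMOD 2]) (hct1 : -(m : ℤ) < ct) (hct3 : ct ≤ (m : ℤ))
    (hdvd : (2 * (m : ℤ)) ∣ ((c + (n : ℤ)) - (ct + (m : ℤ))))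
    (ν : ℚ)
    (hν : ν = ((p : ℚ) - 1) +
        (1 / (4 * (m : ℚ))) * (((c : ℚ) ^ 2 - (n : ℚ) ^ 2) - ((ct : ℚ) ^ 2 - (m : ℚ) ^ 2))) :
    ν ≥ ((p : ℚ) - 1) + (((p : ℚ) - 1) / 2) * ((c : ℚ) - (n : ℚ)) := by
  have hm1 : 1 ≤ m := by
    rw [hm]; exact Nat.div_pos (Nat.le_of_dvd hn hpn) hp.pos
  have hnpm : (n : ℤ) = (p : ℤ) * (m : ℤ) := by
    rw [hm]; exact_mod_cast (Nat.mul_div_cancel' hpn).symm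
  have hmZ : (1 : ℤ) ≤ (m : ℤ) := by exact_mod_cast hm1
  have hpZ : (2 : ℤ) ≤ (p : ℤ) := by exact_mod_cast hp.two_le
  obtain ⟨k, hk⟩ := hdvd
  have hc : c = ct + 2 * (m : ℤ) * k + (m : ℤ) - (n : ℤ) := by linarith
  subst hc
  have hk0 : 0 ≤ k := by
    by_contra h
    push_neg at h
    have : k ≤ -1 := by linarith
    nlinarith
  have hkp : k ≤ (p : ℤ) - 1 := by
    by_contra h
    push_neg at h
    have : (p : ℤ) ≤ k := by linarith
    nlinarith
  have hprod : 0 ≤ ((p : ℤ) - 1 - k) * ((m : ℤ) * ((p : ℤ) - k) - (ct + (m : ℤ))) := by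
    rcases eq_or_lt_of_le hkp with h | h
    · rw [h]; ring_nf; nlinarith
    · have h2 : k ≤ (p : ℤ) - 2 := by linarith
      have f1 : 0 ≤ (p : ℤ) - 1 - k := by linarith
      have f2 : 0 ≤ (m : ℤ) * ((p : ℤ) - k) - (ct + (m : ℤ)) := by nlinarith
      exact mul_nonneg f1 f2
  set a : ℤ := ct + 2 * (m : ℤ) * k + (m : ℤ) - (n : ℤ) with ha
  have key : (a ^ 2 - (n : ℤ) ^ 2) - (ct ^ 2 - (m : ℤ) ^ 2)
      - 2 * (m : ℤ) * ((p : ℤ) - 1) * (a - (n : ℤ))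
      = 4 * (m : ℤ) * (((p : ℤ) - 1 - k) * ((m : ℤ) * ((p : ℤ) - k) - (ct + (m : ℤ)))) := by
    rw [ha, hnpm]; ring
  have keyZ : 2 * (m : ℤ) * ((p : ℤ) - 1) * (a - (n : ℤ))
      ≤ (a ^ 2 - (n : ℤ) ^ 2) - (ct ^ 2 - (m : ℤ) ^ 2) := by nlinarith
  have keyQ : 2 * (m : ℚ) * ((p : ℚ) - 1) * ((a : ℚ) - (n : ℚ))
      ≤ ((a : ℚ) ^ 2 - (n : ℚ) ^ 2) - ((ct : ℚ) ^ 2 - (m : ℚ) ^ 2) := by exact_mod_cast keyZ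
  have hmq : (0 : ℚ) < 4 * (m : ℚ) := by positivity
  rw [hν, ge_iff_le, add_le_add_iff_left, one_div, inv_mul_eq_div, le_div_iff₀ hmq]
  nlinarith [keyQ]
end
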